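/- arXiv:cs/0602047 — 4 statements merged into one kernel-verified Lean document; each statement's English description precedes it below -/
import Mathlib

section
/- Let p be an odd prime, q = (p+1)/2 in Z_p, and f : Z_p × Z_p → Z_p defined by f(x,y) = q·(x+y). Define g_0(x,y,z) = f(x,z) and g_{k+1}(x,y,z) = f(g_k(x,y,z), y). Then g_{p-2}(x,y,z) = x - y + z for all x, y, z in Z_p. -/
theorem stmt_2 (p : ℕ) (hp : p.Prime) (hodd : 2 < p) (q : ZMod p) (hq : q + q = 1)
    (f : ZMod p → ZMod p → ZMod p) (hf : ∀ x y, f x y = q * (x + y))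
    (g : ℕ → ZMod p → ZMod p → ZMod p → ZMod p)
    (hg0 : ∀ x y z, g 0 x y z = f x z)
    (hgs : ∀ k x y z, g (k + 1) x y z = f (g k x y z) y) :
    ∀ x y z : ZMod p, g (p - 2) x y z = x - y + z := by
  haveI : Fact p.Prime := ⟨hp⟩
  have key : ∀ k x y z, g k x y z = q ^ (k + 1) * (x + z) + (1 - q ^ k) * y := by
    intro k
    induction k with
    | zero => intro x y z; simp [hg0, hf]
    | succ n ih =>
      intro x y z
      rw [hgs, hf, ih]
      linear_combination y * hq
  intro x y z
  have hq0 : q ≠ 0 := by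
    intro h; rw [h, add_zero] at hq
    exact one_ne_zero hq.symm
  have h1 : q ^ (p - 1) = 1 := ZMod.pow_card_sub_one_eq_one hq0
  have hk : p - 2 + 1 = p - 1 := by omega
  have h2 : q ^ (p - 2) * q = 1 := by
    rw [← pow_succ, hk, h1]
  have h3 : q ^ (p - 2) = 2 := by
    have : (q ^ (p - 2) - 2) * q = 0 := by
      rw [sub_mul, h2, two_mul, hq, sub_self]
    rcases mul_eq_zero.1 this with h | h
    · exact sub_eq_zero.mp h
    · exact absurd h hq0
  rw [key, hk, h1, h3]
  ring
end

section
/- Let D be a finite totally ordered set and f : D × D → D a binary operation such that (1) for all distinct a,b ∈ D, if f(a,b) ≤ min(a,b) then f(b,a) > max(a,b), and (2) f(a,a) ≥ a for all a. Let R ⊆ D^m be a nonempty relation closed under coordinatewise application of f. Then the tuple t_max whose i-th coordinate is the maximum over all tuples in R of the i-th coordinate belongs to R. -/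
private theorem crux_aux (m : ℕ) (D : Finset ℕ) (f : ℕ → ℕ → ℕ)
    (h1 : ∀ a ∈ D, ∀ b ∈ D, a ≠ b → f a b ≤ min a b → f b a > max a b)
    (S : Finset (Fin m → ℕ)) (hS : S.Nonempty)
    (hSD : ∀ t ∈ S, ∀ i, t i ∈ D)
    (hSc : ∀ s ∈ S, ∀ t ∈ S, (fun i => f (s i) (t i)) ∈ S)
    (i j : Fin m) :
    ∃ t ∈ S, t i = S.sup' hS (fun t => t i) ∧ t j = S.sup' hS (fun t => t j) := by
  classical
  obtain ⟨u0, hu0S, hu0⟩ := Finset.exists_mem_eq_sup' hS (fun t => t i)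
  have hSi_ne : (S.filter (fun t => t i = S.sup' hS (fun t => t i))).Nonempty :=
    ⟨u0, Finset.mem_filter.mpr ⟨hu0S, hu0.symm⟩⟩
  obtain ⟨u, huSi, huB⟩ := Finset.exists_mem_eq_sup' hSi_ne (fun t => t j)
  have huS : u ∈ S := (Finset.mem_filter.mp huSi).1
  have hui : u i = S.sup' hS (fun t => t i) := (Finset.mem_filter.mp huSi).2
  have hBMj : u j ≤ S.sup' hS (fun t => t j) := Finset.le_sup' (fun t => t j) huS
  rcases eq_or_lt_of_le hBMj with hEq | hLt
  · exact ⟨u, huS, hui, hEq⟩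
  · exfalso
    obtain ⟨w, hwS, hw⟩ := Finset.exists_mem_eq_sup' hS (fun t => t j)
    have key : ∀ d : ℕ, ∀ z ∈ S, u j < z j →
        S.sup' hS (fun t => t i) ≤ z i + d → False := by
      intro d
      induction d with
      | zero =>
        intro z hzS hzj hle
        have hz1 : z i ≤ S.sup' hS (fun t => t i) := Finset.le_sup' (fun t => t i) hzS
        have hz2 : z i = S.sup' hS (fun t => t i) := le_antisymm hz1 hle
        have hzSi : z ∈ S.filter (fun t => t i = S.sup' hS (fun t => t i)) :=
          Finset.mem_filter.mpr ⟨hzS, hz2⟩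
        have h4 := Finset.le_sup' (fun t => t j) hzSi
        rw [huB] at h4
        exact absurd h4 (not_le.mpr hzj)
      | succ d ih =>
        intro z hzS hzj hle
        have hziMi : z i ≤ S.sup' hS (fun t => t i) := Finset.le_sup' (fun t => t i) hzS
        rcases eq_or_lt_of_le hziMi with hEq2 | hLt2
        · have hzSi : z ∈ S.filter (fun t => t i = S.sup' hS (fun t => t i)) :=
            Finset.mem_filter.mpr ⟨hzS, hEq2⟩
          have h4 := Finset.le_sup' (fun t => t j) hzSi
          rw [huB] at h4
          exact absurd h4 (not_le.mpr hzj)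
        · have hzD : z i ∈ D := hSD z hzS i
          have hMiD : S.sup' hS (fun t => t i) ∈ D := by
            rw [← hui]; exact hSD u huS i
          have hzu : (fun k => f (z k) (u k)) ∈ S := hSc z hzS u huS
          have huz : (fun k => f (u k) (z k)) ∈ S := hSc u huS z hzS
          have fA1 : z i < f (z i) (S.sup' hS (fun t => t i)) := by
            by_contra h
            push_neg at h
            have hmax := h1 (z i) hzD _ hMiD (ne_of_lt hLt2)
              (by rw [min_eq_left hziMi]; exact h)
            have h3 : f (u i) (z i) ≤ S.sup' hS (fun t => t i) :=
              Finset.le_sup' (fun t => t i) huz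
            rw [hui] at h3
            rw [max_eq_right hziMi] at hmax
            exact absurd hmax (not_lt.mpr h3)
          have fA2 : z i < f (S.sup' hS (fun t => t i)) (z i) := by
            by_contra h
            push_neg at h
            have hmax := h1 _ hMiD (z i) hzD (ne_of_lt hLt2).symm
              (by rw [min_eq_right hziMi]; exact h)
            have h3 : f (z i) (u i) ≤ S.sup' hS (fun t => t i) :=
              Finset.le_sup' (fun t => t i) hzu
            rw [hui] at h3
            rw [max_eq_left hziMi] at hmax
            exact absurd hmax (not_lt.mpr h3)
          by_cases hc : u j < f (z j) (u j)
          · refine ih (fun k => f (z k) (u k)) hzu ?_ ?_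
            · show u j < f (z j) (u j)
              exact hc
            · show S.sup' hS (fun t => t i) ≤ f (z i) (u i) + d
              have hzi1 : z i + 1 ≤ f (z i) (u i) := by rw [hui]; exact fA1
              linarith
          · push_neg at hc
            have hzjD : z j ∈ D := hSD z hzS j
            have hBD : u j ∈ D := hSD u huS j
            have hc' : f (z j) (u j) ≤ u j := hc
            have hmax := h1 (z j) hzjD (u j) hBD (ne_of_gt hzj)
              (by rw [min_eq_right (le_of_lt hzj)]; exact hc')
            rw [max_eq_left (le_of_lt hzj)] at hmax
            refine ih (fun k => f (u k) (z k)) huz ?_ ?_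
            · show u j < f (u j) (z j)
              linarith
            · show S.sup' hS (fun t => t i) ≤ f (u i) (z i) + d
              have hzi1 : z i + 1 ≤ f (u i) (z i) := by rw [hui]; exact fA2
              linarith
    refine key (S.sup' hS (fun t => t i)) w hwS ?_ (Nat.le_add_left _ _)
    rw [hw] at hLt
    exact hLt

private theorem main_aux (m : ℕ) (D : Finset ℕ) (f : ℕ → ℕ → ℕ)
    (h1 : ∀ a ∈ D, ∀ b ∈ D, a ≠ b → f a b ≤ min a b → f b a > max a b)
    (h2 : ∀ a ∈ D, f a a ≥ a) :
    ∀ N : ℕ, ∀ S : Finset (Fin m → ℕ), ∀ hS : S.Nonempty, S.card ≤ N →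
      (∀ t ∈ S, ∀ i, t i ∈ D) → (∀ s ∈ S, ∀ t ∈ S, (fun i => f (s i) (t i)) ∈ S) →
      (fun i => S.sup' hS fun t => t i) ∈ S := by
  intro N
  induction N with
  | zero =>
    intro S hS hcard _ _
    have := Finset.card_pos.mpr hS
    omega
  | succ N ih =>
    intro S hS hcard hSD hSc
    classical
    by_cases hall : ∀ t ∈ S, ∀ i, t i = S.sup' hS fun t => t i
    · obtain ⟨t0, ht0⟩ := id hS
      have heq : (fun i => S.sup' hS fun t => t i) = t0 :=
        funext fun i => (hall t0 ht0 i).symm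
      rw [heq]; exact ht0
    · push_neg at hall
      obtain ⟨t0, ht0S, i0, hti0⟩ := hall
      obtain ⟨u0, hu0S, hu0⟩ := Finset.exists_mem_eq_sup' hS (fun t => t i0)
      have hsub : S.filter (fun t => t i0 = S.sup' hS (fun t => t i0)) ⊆ S :=
        Finset.filter_subset _ _
      have hS'ne : (S.filter (fun t => t i0 = S.sup' hS (fun t => t i0))).Nonempty :=
        ⟨u0, Finset.mem_filter.mpr ⟨hu0S, hu0.symm⟩⟩
      have hM0D : S.sup' hS (fun t => t i0) ∈ D := by
        rw [hu0]; exact hSD u0 hu0S i0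
      have hS'c : ∀ s ∈ S.filter (fun t => t i0 = S.sup' hS (fun t => t i0)),
          ∀ t ∈ S.filter (fun t => t i0 = S.sup' hS (fun t => t i0)),
          (fun i => f (s i) (t i)) ∈ S.filter (fun t => t i0 = S.sup' hS (fun t => t i0)) := by
        intro s hs t ht
        have hsS := hsub hs
        have htS := hsub ht
        refine Finset.mem_filter.mpr ⟨hSc s hsS t htS, ?_⟩
        have hle : f (s i0) (t i0) ≤ S.sup' hS (fun t => t i0) :=
          Finset.le_sup' (fun t => t i0) (hSc s hsS t htS)
        have hs2 : s i0 = S.sup' hS (fun t => t i0) := (Finset.mem_filter.mp hs).2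
        have ht2 : t i0 = S.sup' hS (fun t => t i0) := (Finset.mem_filter.mp ht).2
        have hge := h2 _ hM0D
        show f (s i0) (t i0) = S.sup' hS (fun t => t i0)
        rw [hs2, ht2] at hle ⊢
        exact le_antisymm hle hge
      have hS'D : ∀ t ∈ S.filter (fun t => t i0 = S.sup' hS (fun t => t i0)),
          ∀ i, t i ∈ D := fun t ht i => hSD t (hsub ht) i
      have hcard' : (S.filter (fun t => t i0 = S.sup' hS (fun t => t i0))).card ≤ N := by
        have ht0n : t0 ∉ S.filter (fun t => t i0 = S.sup' hS (fun t => t i0)) :=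
          fun h => hti0 (Finset.mem_filter.mp h).2
        have hlt : (S.filter (fun t => t i0 = S.sup' hS (fun t => t i0))).card < S.card :=
          Finset.card_lt_card ((Finset.ssubset_iff_of_subset hsub).mpr ⟨t0, ht0S, ht0n⟩)
        exact Nat.lt_succ_iff.mp (lt_of_lt_of_le hlt hcard)
      have hmem := ih _ hS'ne hcard' hS'D hS'c
      have hsup : ∀ q : Fin m,
          (S.filter (fun t => t i0 = S.sup' hS (fun t => t i0))).sup' hS'ne (fun t => t q)
            = S.sup' hS (fun t => t q) := by
        intro q
        apply le_antisymm
        · exact Finset.sup'_le _ _ fun t ht => Finset.le_sup' (fun t => t q) (hsub ht)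
        · obtain ⟨t, htS, hti, htj⟩ := crux_aux m D f h1 S hS hSD hSc i0 q
          have htS' : t ∈ S.filter (fun t => t i0 = S.sup' hS (fun t => t i0)) :=
            Finset.mem_filter.mpr ⟨htS, hti⟩
          exact le_of_eq_of_le htj.symm (Finset.le_sup' (fun t => t q) htS')
      have heq : (fun q => (S.filter (fun t => t i0 = S.sup' hS (fun t => t i0))).sup'
          hS'ne fun t => t q) = (fun q => S.sup' hS fun t => t q) :=
        funext fun q => hsup q
      rw [heq] at hmem
      exact hsub hmem

theorem stmt_7 (m : ℕ) (D : Finset ℕ) (f : ℕ → ℕ → ℕ)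
    (hfD : ∀ a ∈ D, ∀ b ∈ D, f a b ∈ D)
    (h1 : ∀ a ∈ D, ∀ b ∈ D, a ≠ b → f a b ≤ min a b → f b a > max a b)
    (h2 : ∀ a ∈ D, f a a ≥ a)
    (R : Finset (Fin m → ℕ)) (hne : R.Nonempty)
    (hRD : ∀ t ∈ R, ∀ i, t i ∈ D)
    (hclosed : ∀ s ∈ R, ∀ t ∈ R, (fun i => f (s i) (t i)) ∈ R) :
    (fun i => R.sup' hne fun t => t i) ∈ R :=
  main_aux m D f h1 h2 R.card R hne le_rfl hRD hclosed
end

section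
/- Let f be a 2-semilattice operation on a finite set D ⊆ ℕ with 0 ∈ D. Suppose there exist a,b ∈ D with a < b and f(a,b) = a, and let a* be the least element of D for which there exists b* with f(a*,b*) = a*; assume a* > 0. Then for all a,b ∈ D, f(a,b) = 0 implies a = b = 0. -/
theorem stmt_12 (D : Finset ℕ) (h0 : 0 ∈ D) (f : ℕ → ℕ → ℕ)
    (hfD : ∀ a ∈ D, ∀ b ∈ D, f a b ∈ D)
    (hidem : ∀ a ∈ D, f a a = a)
    (hcomm : ∀ a ∈ D, ∀ b ∈ D, f a b = f b a)
    (h2sl : ∀ a ∈ D, ∀ b ∈ D, f a (f a b) = f a b)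
    (astar : ℕ) (hastar : astar ∈ D)
    (hex : ∃ b ∈ D, astar < b ∧ f astar b = astar)
    (hmin : ∀ c ∈ D, (∃ d ∈ D, c < d ∧ f c d = c) → astar ≤ c)
    (hpos : 0 < astar) :
    ∀ a ∈ D, ∀ b ∈ D, f a b = 0 → a = 0 ∧ b = 0 := by
  intro a ha b hb hab
  have key : ∀ x ∈ D, f x 0 = 0 → x = 0 := by
    intro x hx hx0
    by_contra hne
    have hxpos : 0 < x := Nat.pos_of_ne_zero hne
    have h0x : f 0 x = 0 := by rw [hcomm 0 h0 x hx]; exact hx0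
    have := hmin 0 h0 ⟨x, hx, hxpos, h0x⟩
    omega
  have ha0 : f a 0 = 0 := by
    have := h2sl a ha b hb
    rw [hab] at this
    exact this
  have hba : f b a = 0 := by rw [hcomm b hb a ha, hab]
  have hb0 : f b 0 = 0 := by
    have := h2sl b hb a ha
    rw [hba] at this
    exact this
  exact ⟨key a ha ha0, key b hb hb0⟩
end

section
/- Let R = {(a,a),(a,b),(b,a)} ⊆ D² with 0 < a < b. Restricted to graphs of maximum degree 3, the Maximum Independent Set problem L-reduces to Max Sol({R}) with parameters β = 4b and γ = 1/(b−a): given a graph G = (V,E) with max degree 3 and no isolated vertices, construct the Max Sol instance with a constraint R(x_i,x_j) for each edge; then opt of the constructed instance is at most 4b times opt of the independent set instance, and from any feasible assignment S', the set of variables assigned b is an independent set whose distance from optimum is at most 1/(b−a) times the distance of S' from optimum. -/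
/-!
A maximum independent set `I` of a graph of maximum degree `3` is maximal, hence dominating, so
`|V| ≤ 4 |I|`. On a graph without isolated vertices every feasible assignment takes only the values
`a` and `b`, and the vertices assigned `b` form an independent set; conversely the assignment that
is `b` exactly on an independent set is feasible. A feasible `s` with `k` vertices assigned `b` has
value `a |V| + (b - a) k`, which is at most `b |V| ≤ 4 b |I|`, and the feasible assignment built
from `I` shows `opt ≥ a |V| + (b - a) |I|`, whence the gap estimate.
-/

open Finset

namespace SimpleGraph

variable {V : Type*} {G : SimpleGraph V}

lemma isIndepSet_iff_forall_not_adj {s : Set V} :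
    G.IsIndepSet s ↔ ∀ v ∈ s, ∀ w ∈ s, ¬ G.Adj v w :=
  ⟨fun h _ hv _ hw hadj => h hv hw hadj.ne hadj, fun h _ hv _ hw _ => h _ hv _ hw⟩

lemma exists_adj_of_maximal_isIndepSet {s : Set V} (hs : Maximal G.IsIndepSet s) {v : V}
    (hv : v ∉ s) : ∃ w ∈ s, G.Adj v w := by
  by_contra! hno
  have hins : G.IsIndepSet (insert v s) :=
    hs.prop.insert_of_notMem hv fun w hw => ⟨hno w hw, fun h => hno w hw h.symm⟩
  exact hv (hs.2 hins (Set.subset_insert v s) (Set.mem_insert v s))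

lemma card_le_mul_card_of_forall_exists_adj [Fintype V] [DecidableEq V] [DecidableRel G.Adj]
    {d : ℕ} (hdeg : ∀ v, G.degree v ≤ d) {s : Finset V}
    (hdom : ∀ v ∉ s, ∃ w ∈ s, G.Adj v w) : Fintype.card V ≤ (d + 1) * #s := by
  have hcompl : sᶜ ⊆ s.biUnion fun w => G.neighborFinset w := fun v hv => by
    obtain ⟨w, hw, hadj⟩ := hdom v (mem_compl.mp hv)
    exact mem_biUnion.mpr ⟨w, hw, (G.mem_neighborFinset w v).mpr hadj.symm⟩
  have hcard_compl : #sᶜ ≤ d * #s :=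
    calc #sᶜ ≤ #(s.biUnion fun w => G.neighborFinset w) := card_le_card hcompl
      _ ≤ ∑ w ∈ s, #(G.neighborFinset w) := card_biUnion_le
      _ ≤ #s * d := sum_le_card_nsmul s _ d fun w _ =>
          (G.card_neighborFinset_eq_degree w).trans_le (hdeg w)
      _ = d * #s := mul_comm _ _
  rw [← card_add_card_compl s]
  linarith

lemma IsMaximumIndepSet.card_le_mul_card [Fintype V] [DecidableEq V] [DecidableRel G.Adj]
    {d : ℕ} (hdeg : ∀ v, G.degree v ≤ d) {s : Finset V} (hs : G.IsMaximumIndepSet s) :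
    Fintype.card V ≤ (d + 1) * #s :=
  card_le_mul_card_of_forall_exists_adj hdeg fun _ hv =>
    exists_adj_of_maximal_isIndepSet (hs.isMaximalIndepSet s) (by exact_mod_cast hv)

/-- Feasibility for the Max Sol instance with one constraint `R(x_v, x_w)` per edge `vw`, where
`R = {(a,a), (a,b), (b,a)}`. -/
def IsFeasibleAssignment {α : Type*} (G : SimpleGraph V) (a b : α) (s : V → α) : Prop :=
  ∀ v w, G.Adj v w → (s v = a ∧ s w = a) ∨ (s v = a ∧ s w = b) ∨ (s v = b ∧ s w = a)

section Feasible

variable {α : Type*} {a b : α} {s : V → α}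

lemma IsFeasibleAssignment.eq_or_eq (hs : G.IsFeasibleAssignment a b s) {v w : V}
    (hadj : G.Adj v w) : s v = a ∨ s v = b := by
  rcases hs v w hadj with ⟨h, -⟩ | ⟨h, -⟩ | ⟨h, -⟩ <;> simp [h]

lemma IsFeasibleAssignment.isIndepSet_setOf_eq (hs : G.IsFeasibleAssignment a b s)
    (hab : a ≠ b) : G.IsIndepSet {v | s v = b} := fun v hv w hw _ hadj => by
  rcases hs v w hadj with ⟨h, -⟩ | ⟨h, -⟩ | ⟨-, h⟩
  · exact hab (h.symm.trans hv)
  · exact hab (h.symm.trans hv)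
  · exact hab (h.symm.trans hw)

lemma isFeasibleAssignment_ite {I : Set V} [DecidablePred (· ∈ I)] (hI : G.IsIndepSet I) :
    G.IsFeasibleAssignment a b fun v => if v ∈ I then b else a := fun v w hadj => by
  by_cases hv : v ∈ I <;> by_cases hw : w ∈ I
  · exact absurd hadj (hI hv hw (G.ne_of_adj hadj))
  all_goals simp [hv, hw]

end Feasible

lemma sum_eq_of_forall_eq_or_eq {s : V → ℕ} {a b : ℕ} (hab : a ≤ b) (t : Finset V)
    (hs : ∀ v ∈ t, s v = a ∨ s v = b) :
    ∑ v ∈ t, s v = a * #t + (b - a) * #{v ∈ t | s v = b} := by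
  rw [card_filter, mul_sum, card_eq_sum_ones, mul_sum, ← sum_add_distrib]
  refine sum_congr rfl fun v hv => ?_
  rcases hs v hv with h | h <;> rw [h] <;> split_ifs <;> omega

end SimpleGraph

theorem stmt_13_general (V : Type*) [Fintype V] [DecidableEq V]
    (G : SimpleGraph V) [DecidableRel G.Adj]
    (hdeg : ∀ v, G.degree v ≤ 3)
    (hiso : ∀ v, 0 < G.degree v)
    (a b : ℕ) (hab : a < b)
    (Feasible : (V → ℕ) → Prop)
    (hFeasible : ∀ s, Feasible s ↔ ∀ v w, G.Adj v w →
      ((s v = a ∧ s w = a) ∨ (s v = a ∧ s w = b) ∨ (s v = b ∧ s w = a)))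
    (IndepSet : Finset V → Prop)
    (hIndep : ∀ I, IndepSet I ↔ ∀ v ∈ I, ∀ w ∈ I, ¬ G.Adj v w)
    (optIS : ℕ)
    (hoptIS₁ : ∃ I, IndepSet I ∧ I.card = optIS)
    (hoptIS₂ : ∀ I, IndepSet I → I.card ≤ optIS)
    (optMS : ℕ)
    (hoptMS₁ : ∃ s, Feasible s ∧ ∑ v, s v = optMS)
    (hoptMS₂ : ∀ s, Feasible s → ∑ v, s v ≤ optMS) :
    optMS ≤ 4 * b * optIS ∧
    ∀ s, Feasible s →
      IndepSet (Finset.univ.filter fun v => s v = b) ∧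
      (b - a) * (optIS - (Finset.univ.filter fun v => s v = b).card) ≤
        optMS - ∑ v, s v := by
  replace hIndep : ∀ I : Finset V, IndepSet I ↔ G.IsIndepSet (I : Set V) :=
    fun I => (hIndep I).trans SimpleGraph.isIndepSet_iff_forall_not_adj.symm
  replace hFeasible : ∀ s, Feasible s ↔ G.IsFeasibleAssignment a b s := hFeasible
  obtain ⟨I, hI, rfl⟩ := hoptIS₁
  have hmax : G.IsMaximumIndepSet I :=
    ⟨(hIndep I).mp hI, fun J hJ => hoptIS₂ J ((hIndep J).mpr hJ)⟩
  have hcard : Fintype.card V ≤ 4 * #I := hmax.card_le_mul_card hdeg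
  have hval : ∀ s, Feasible s → ∀ v, s v = a ∨ s v = b := fun s hs v =>
    have ⟨_, hadj⟩ := (G.degree_pos_iff_exists_adj v).mp (hiso v)
    ((hFeasible s).mp hs).eq_or_eq hadj
  have hsum : ∀ s, Feasible s → ∑ v, s v = a * Fintype.card V + (b - a) * #{v | s v = b} :=
    fun s hs => SimpleGraph.sum_eq_of_forall_eq_or_eq hab.le univ fun v _ => hval s hs v
  have hlower : a * Fintype.card V + (b - a) * #I ≤ optMS := by
    have hfeas : Feasible fun v => if v ∈ I then b else a :=
      (hFeasible _).mpr (SimpleGraph.isFeasibleAssignment_ite (I := (I : Set V)) hmax.isIndepSet)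
    have hfilter : ({v | (if v ∈ I then b else a) = b} : Finset V) = I := by
      ext v; by_cases hv : v ∈ I <;> simp [hv, hab.ne]
    simpa only [hsum _ hfeas, hfilter] using hoptMS₂ _ hfeas
  refine ⟨?_, fun s hs => ⟨?_, ?_⟩⟩
  · obtain ⟨t, ht, rfl⟩ := hoptMS₁
    calc ∑ v, t v ≤ #(univ : Finset V) * b :=
          sum_le_card_nsmul _ _ _ fun v _ => (hval t ht v).elim (· ▸ hab.le) le_of_eq
      _ ≤ 4 * b * #I := by rw [card_univ]; nlinarith
  · rw [hIndep, Finset.coe_filter]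
    simpa using ((hFeasible s).mp hs).isIndepSet_setOf_eq hab.ne
  · rw [hsum s hs, Nat.mul_sub]
    omega

theorem stmt_13 (V : Type*) [Fintype V] [DecidableEq V]
    (G : SimpleGraph V) [DecidableRel G.Adj]
    (hdeg : ∀ v, G.degree v ≤ 3)
    (hiso : ∀ v, 0 < G.degree v)
    (a b : ℕ) (ha : 0 < a) (hab : a < b)
    (Feasible : (V → ℕ) → Prop)
    (hFeasible : ∀ s, Feasible s ↔ ∀ v w, G.Adj v w →
      ((s v = a ∧ s w = a) ∨ (s v = a ∧ s w = b) ∨ (s v = b ∧ s w = a)))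
    (IndepSet : Finset V → Prop)
    (hIndep : ∀ I, IndepSet I ↔ ∀ v ∈ I, ∀ w ∈ I, ¬ G.Adj v w)
    (optIS : ℕ)
    (hoptIS₁ : ∃ I, IndepSet I ∧ I.card = optIS)
    (hoptIS₂ : ∀ I, IndepSet I → I.card ≤ optIS)
    (optMS : ℕ)
    (hoptMS₁ : ∃ s, Feasible s ∧ ∑ v, s v = optMS)
    (hoptMS₂ : ∀ s, Feasible s → ∑ v, s v ≤ optMS) :
    optMS ≤ 4 * b * optIS ∧
    ∀ s, Feasible s →
      IndepSet (Finset.univ.filter fun v => s v = b) ∧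
      (b - a) * (optIS - (Finset.univ.filter fun v => s v = b).card) ≤
        optMS - ∑ v, s v :=
  stmt_13_general V G hdeg hiso a b hab Feasible hFeasible IndepSet hIndep optIS hoptIS₁ hoptIS₂
    optMS hoptMS₁ hoptMS₂
end
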